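/- arXiv:2305.17312 — 3 statements merged into one kernel-verified Lean document; each statement's English description precedes it below -/
import Mathlib

section
/- Let t be a nonempty word over an alphabet X that overlaps with itself, i.e., some nonempty word is both a proper prefix and a proper suffix of t. Then t has one of the following forms: t = xⁿ for some nonempty word x and some n ≥ 2; or t = x·s·x for some nonempty words x and s; or t = x·s·x·s·x for some nonempty words x and s. -/
/-- The `n`-fold concatenation power of a word. -/
def wpow {X : Type*} (x : List X) : ℕ → List X
  | 0 => []
  | n + 1 => x ++ wpow x n

/-- A word `t` overlaps with itself if some nonempty word is both a proper prefix and a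
proper suffix of `t`. -/
def OverlapsSelf {X : Type*} (t : List X) : Prop :=
  ∃ z : List X, z ≠ [] ∧ z ≠ t ∧ z <+: t ∧ z <:+ t

lemma key_struct {X : Type*} (w : List X) (hw : w ≠ []) :
    ∀ n (z : List X), z.length ≤ n → z <+: w ++ z →
      ∃ q r, r <+: w ∧ r.length < w.length ∧ z = wpow w q ++ r := by
  intro n
  induction n with
  | zero =>
    intro z hz _
    have hz0 : z = [] := List.length_eq_zero_iff.1 (Nat.le_zero.1 hz)
    exact ⟨0, [], List.nil_prefix, by simpa using List.length_pos_iff.2 hw, by simp [wpow, hz0]⟩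
  | succ n ih =>
    intro z hz hpre
    by_cases hlt : z.length < w.length
    · exact ⟨0, z, List.prefix_of_prefix_length_le hpre (List.prefix_append w z) hlt.le,
        hlt, by simp [wpow]⟩
    · push_neg at hlt
      have hwz : w <+: z := List.prefix_of_prefix_length_le (List.prefix_append w z) hpre hlt
      obtain ⟨z', rfl⟩ := hwz
      have h1 : z' <+: w ++ z' := by
        have h := hpre
        rwa [List.prefix_append_right_inj] at h
      have hlen : z'.length ≤ n := by
        have := List.length_pos_iff.2 hw
        simp only [List.length_append] at hz
        omega
      obtain ⟨q, r, h2, h3, h4⟩ := ih z' hlen h1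
      exact ⟨q + 1, r, h2, h3, by simp [wpow, h4]⟩

/-- A nonempty word that overlaps with itself is of one of the forms `xⁿ` (`n ≥ 2`),
`x·s·x`, or `x·s·x·s·x` with `x`, `s` nonempty. -/
theorem overlapsSelf_structure {X : Type*} (t : List X) (ht : t ≠ [])
    (hov : OverlapsSelf t) :
    (∃ (x : List X) (n : ℕ), x ≠ [] ∧ 2 ≤ n ∧ t = wpow x n) ∨
    (∃ x s : List X, x ≠ [] ∧ s ≠ [] ∧ t = x ++ s ++ x) ∨
    (∃ x s : List X, x ≠ [] ∧ s ≠ [] ∧ t = x ++ s ++ x ++ s ++ x) := by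
  obtain ⟨z, hz0, hzt, hpre, hsuf⟩ := hov
  obtain ⟨w, rfl⟩ := hsuf
  have hw : w ≠ [] := by rintro rfl; simp at hzt
  obtain ⟨q, r, hrw, hrl, hz⟩ := key_struct w hw z.length z le_rfl hpre
  rcases eq_or_ne r [] with rfl | hr
  · -- t = w ^ (q+1)
    left
    cases q with
    | zero => simp [wpow] at hz; exact absurd hz hz0
    | succ q' =>
      refine ⟨w, q' + 2, hw, by omega, ?_⟩
      simp [hz, wpow]
  · -- t = r ++ (s ++ wpow w q) ++ r
    right; left
    obtain ⟨s, rfl⟩ := hrw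
    have hs : s ≠ [] := by
      rintro rfl
      simp at hrl
    refine ⟨r, s ++ wpow (r ++ s) q, hr, by simp [hs], ?_⟩
    simp [hz, List.append_assoc]
end

section
/- Let u be a word over an alphabet X admitting a factorization u = x·s·x·s·x, where x and s are nonempty and x·s·x is the longest nonempty word that is both a proper prefix and a proper suffix of u (the maximal border of u). Then u is not a proper power: there exist no nonempty word z and integer n ≥ 2 with u = zⁿ. -/
/-- A border of a word `u`: a nonempty word that is both a proper prefix and a proper
suffix of `u`. -/
def IsBorder {X : Type*} (z u : List X) : Prop :=
  z ≠ [] ∧ z ≠ u ∧ z <+: u ∧ z <:+ u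

/-- `u` has period `r` (pointwise). -/
def Per {X : Type*} (u : List X) (r : ℕ) : Prop :=
  ∀ i : ℕ, i + r < u.length → u[i]? = u[i + r]?

lemma wpow_length {X : Type*} (z : List X) : ∀ n, (wpow z n).length = n * z.length := by
  intro n
  induction n with
  | zero => simp [wpow]
  | succ m ih => simp [wpow, ih]; ring

lemma wpow_succ' {X : Type*} (z : List X) : ∀ n, wpow z (n + 1) = wpow z n ++ z := by
  intro n
  induction n with
  | zero => simp [wpow]
  | succ m ih =>
    show z ++ wpow z (m + 1) = (z ++ wpow z m) ++ z
    rw [ih]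
    simp

lemma per_of_border {X : Type*} {u b : List X} (hp : b <+: u) (hsuf : b <:+ u) :
    Per u (u.length - b.length) := by
  obtain ⟨t, ht⟩ := hp
  obtain ⟨c, hc⟩ := hsuf
  have hbl : b.length ≤ u.length := by
    rw [← ht]; simp
  have hcl : c.length = u.length - b.length := by
    have : c.length + b.length = u.length := by rw [← hc]; simp
    omega
  intro i hi
  set r := u.length - b.length with hr
  have hib : i < b.length := by omega
  have h1 : u[i]? = b[i]? := by
    conv_lhs => rw [← ht]
    rw [List.getElem?_append_left hib]
  have h2 : u[i + r]? = b[i]? := by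
    conv_lhs => rw [← hc]
    rw [List.getElem?_append_right (by omega)]
    congr 1
    omega
  rw [h1, h2]

lemma border_of_per {X : Type*} {u : List X} {r : ℕ} (h0 : 0 < r) (hr : r < u.length)
    (hper : Per u r) : IsBorder (u.take (u.length - r)) u := by
  have hdrop : u.drop r = u.take (u.length - r) := by
    apply List.ext_getElem?
    intro i
    rw [List.getElem?_drop]
    by_cases hi : i + r < u.length
    · simp only [List.getElem?_take]
      rw [if_pos (by omega)]
      rw [show r + i = i + r by omega]
      exact (hper i hi).symm
    · rw [List.getElem?_eq_none (by omega),
        List.getElem?_eq_none (by simp only [List.length_take]; omega)]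
  refine ⟨?_, ?_, List.take_prefix _ _, ?_⟩
  · intro h
    have := congrArg List.length h
    simp at this
    omega
  · intro h
    have := congrArg List.length h
    simp at this
    omega
  · rw [← hdrop]
    exact List.drop_suffix r u

lemma per_sub {X : Type*} {u : List X} {p q : ℕ} (hpq : p < q) (hL : p + q ≤ u.length)
    (hp : Per u p) (hq : Per u q) : Per u (q - p) := by
  intro i hi
  by_cases h : i + q < u.length
  · have h1 := hp (i + q - p) (by omega)
    rw [show i + q - p + p = i + q by omega] at h1
    rw [hq i h, ← h1]
    congr 1
    omega
  · have hip : p ≤ i := by omega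
    have h1 := hp (i - p) (by omega)
    have h2 := hq (i - p) (by omega)
    rw [show i - p + p = i by omega] at h1
    rw [← h1, h2]
    congr 1
    omega

lemma per_gcd {X : Type*} (u : List X) :
    ∀ N p q, p + q ≤ N → 0 < p → 0 < q → p + q ≤ u.length → Per u p → Per u q →
      Per u (Nat.gcd p q) := by
  intro N
  induction N with
  | zero => intro p q h hp; omega
  | succ N ih =>
    intro p q hN hp0 hq0 hL hp hq
    rcases lt_trichotomy p q with h | h | h
    · have hsub := per_sub h hL hp hq
      have := ih p (q - p) (by omega) hp0 (by omega) (by omega) hp hsub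
      rwa [Nat.gcd_sub_self_right (le_of_lt h)] at this
    · subst h
      simpa using hp
    · have hL' : q + p ≤ u.length := by omega
      have hsub := per_sub h hL' hq hp
      have := ih q (p - q) (by omega) hq0 (by omega) (by omega) hq hsub
      rw [Nat.gcd_sub_self_right (le_of_lt h)] at this
      rwa [Nat.gcd_comm]

/-- If `u = x·s·x·s·x` with `x`, `s` nonempty and `x·s·x` the maximal border of `u`,
then `u` is not a proper power. -/
theorem not_proper_power_of_xsxsx {X : Type*} (u x s : List X)
    (hx : x ≠ []) (hs : s ≠ []) (hu : u = x ++ s ++ x ++ s ++ x)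
    (hborder : IsBorder (x ++ s ++ x) u)
    (hmax : ∀ z : List X, IsBorder z u → z.length ≤ (x ++ s ++ x).length) :
    ¬ ∃ (z : List X) (n : ℕ), z ≠ [] ∧ 2 ≤ n ∧ u = wpow z n := by
  rintro ⟨z, n, hz, hn2, huz⟩
  obtain ⟨m, rfl⟩ : ∃ m, n = m + 1 := ⟨n - 1, by omega⟩
  have hm1 : 1 ≤ m := by omega
  have hx0 : 0 < x.length := List.length_pos_iff.mpr hx
  have hs0 : 0 < s.length := List.length_pos_iff.mpr hs
  have hz0 : 0 < z.length := List.length_pos_iff.mpr hz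
  set L := u.length with hL
  set p := x.length + s.length with hpdef
  set q := z.length with hqdef
  have hLval : L = 3 * x.length + 2 * s.length := by
    rw [hL, hu]; simp; ring
  have hLnq : L = (m + 1) * q := by
    rw [hL, huz, wpow_length]
  -- period p from the border x s x
  have hbl : (x ++ s ++ x).length = L - p := by simp; omega
  have hperp : Per u p := by
    have := per_of_border hborder.2.2.1 hborder.2.2.2
    rw [hbl] at this
    have hpL : p < L := by omega
    rwa [show L - (L - p) = p by omega] at this
  -- z^m is a border of u
  have hupre : u = z ++ wpow z m := by rw [huz]; rfl
  have husuf : u = wpow z m ++ z := by rw [huz, wpow_succ']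
  have hwl : (wpow z m).length = m * q := wpow_length z m
  have hwborder : IsBorder (wpow z m) u := by
    refine ⟨?_, ?_, ⟨z, by rw [husuf]⟩, ⟨z, by rw [hupre]⟩⟩
    · intro h
      have := congrArg List.length h
      rw [hwl] at this
      simp at this
      rcases this with h' | h' <;> omega
    · intro h
      have := congrArg List.length h
      rw [hwl, ← hL, hLnq] at this
      nlinarith
  -- hence p ≤ q
  have hmaxw := hmax _ hwborder
  rw [hwl, hbl] at hmaxw
  have hnq : m * q = L - q := by rw [hLnq]; ring_nf; omega
  rw [hnq] at hmaxw
  have hqL : q ≤ L := by nlinarith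
  have hpq : p ≤ q := by omega
  -- period q from border z^m
  have hperq : Per u q := by
    have := per_of_border hwborder.2.2.1 hwborder.2.2.2
    rw [hwl, hnq, show L - (L - q) = q by omega] at this
    exact this
  -- gcd period
  have hpqL : p + q ≤ L := by nlinarith
  set g := Nat.gcd p q with hg
  have hperg : Per u g := per_gcd u (p + q) p q le_rfl (by omega) hz0 hpqL hperp hperq
  have hg0 : 0 < g := Nat.gcd_pos_of_pos_left q (by omega)
  have hgp : g ≤ p := Nat.gcd_le_left q (by omega)
  have hgL : g < L := by omega
  have hgborder := border_of_per hg0 hgL hperg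
  have hmg := hmax _ hgborder
  rw [hbl, List.length_take] at hmg
  have hgep : p ≤ g := by omega
  have hgeq : g = p := le_antisymm hgp hgep
  -- p divides q, hence p divides L, hence p divides x.length : contradiction
  have hpdvdq : p ∣ q := hgeq ▸ Nat.gcd_dvd_right p q
  have hpdvdL : p ∣ L := hLnq ▸ Dvd.dvd.mul_left hpdvdq (m + 1)
  have hpdvdx : p ∣ x.length := by
    have h2p : (2 * p : ℕ) = 2 * p := rfl
    have hxval : x.length = L - 2 * p := by omega
    rw [hxval]
    exact Nat.dvd_sub hpdvdL (Dvd.dvd.mul_left dvd_rfl 2)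
  have : p ≤ x.length := Nat.le_of_dvd hx0 hpdvdx
  omega
end

section
/- Let u and v be nonempty words over an alphabet X such that: u is not a factor of v and v is not a factor of u; v does not overlap with itself (no nonempty word is both a proper prefix and a proper suffix of v); and u and v do not overlap (no nonempty word z with z ≠ u and z ≠ v is simultaneously a prefix of u and a suffix of v, or a prefix of v and a suffix of u). Then for all words a, b over X and for each r ∈ {u, v}: every occurrence of r as a factor of a·v·b at a position i satisfying i < |a| + |v| and i + |r| > |a| (i.e., every occurrence using at least one letter of the distinguished middle factor v) satisfies r = v and i = |a|; in other words, the only occurrence of u or of v meeting the middle factor is the middle factor v itself. -/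
/-- `u` is a subword (factor) of `v`. -/
def IsFactor {X : Type*} (u v : List X) : Prop :=
  ∃ a b : List X, v = a ++ u ++ b

/-- Two words `u` and `v` overlap if some nonempty word `z` with `z ≠ u` and `z ≠ v` is
simultaneously a prefix of `u` and a suffix of `v`, or a prefix of `v` and a suffix of `u`. -/
def Overlaps {X : Type*} (u v : List X) : Prop :=
  ∃ z : List X, z ≠ [] ∧ z ≠ u ∧ z ≠ v ∧
    ((z <+: u ∧ z <:+ v) ∨ (z <+: v ∧ z <:+ u))

/-- If `u` and `v` are nonempty, neither is a factor of the other, `v` has no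
self-overlap, and `u`, `v` do not overlap, then the only occurrence of `u` or `v` in
`a·v·b` using at least one letter of the distinguished middle factor `v` is the middle
factor `v` itself. -/
theorem middle_occurrence_unique {X : Type*} (u v : List X)
    (hu : u ≠ []) (hv : v ≠ [])
    (hfac₁ : ¬ IsFactor u v) (hfac₂ : ¬ IsFactor v u)
    (hov : ¬ OverlapsSelf v) (houv : ¬ Overlaps u v) :
    ∀ a b r : List X, (r = u ∨ r = v) →
      ∀ p q : List X, a ++ v ++ b = p ++ r ++ q →
        p.length < a.length + v.length → a.length < p.length + r.length →
        r = v ∧ p.length = a.length := by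
  intro a b r hr p q heq hlt₁ hlt₂
  have hrlen : r.length = u.length ∨ r.length = v.length := by
    rcases hr with rfl | rfl <;> simp
  have heq' : a ++ (v ++ b) = p ++ (r ++ q) := by simpa using heq
  have hp : p <+: a ++ (v ++ b) := ⟨r ++ q, heq'.symm⟩
  have ha : a <+: a ++ (v ++ b) := ⟨v ++ b, rfl⟩
  rcases lt_trichotomy p.length a.length with h | h | h
  · -- p is shorter: occurrence starts left of the middle v
    obtain ⟨s, hs⟩ := List.prefix_of_prefix_length_le hp ha h.le
    have hslen : p.length + s.length = a.length := by
      have := congrArg List.length hs; simpa using this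
    have hsne : s ≠ [] := by
      intro h0; subst h0; simp at hslen; omega
    have heq2 : s ++ (v ++ b) = r ++ q := by
      have : p ++ (s ++ (v ++ b)) = p ++ (r ++ q) := by
        rw [← List.append_assoc, hs]; exact heq'
      exact List.append_cancel_left this
    have hsr : s.length ≤ r.length := by omega
    obtain ⟨t, ht⟩ := List.prefix_of_prefix_length_le ⟨v ++ b, by rw [heq2]⟩ ⟨q, rfl⟩ hsr
    -- ht : s ++ t = r
    have htlen : s.length + t.length = r.length := by
      have := congrArg List.length ht; simpa using this
    have htne : t ≠ [] := by
      intro h0; subst h0; simp at htlen; omega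
    have heq3 : v ++ b = t ++ q := by
      have : s ++ (v ++ b) = s ++ (t ++ q) := by
        rw [heq2, ← ht]; simp
      exact List.append_cancel_left this
    by_cases hc : t.length ≤ v.length
    · have htv : t <+: v := List.prefix_of_prefix_length_le ⟨q, heq3.symm⟩ ⟨b, rfl⟩ hc
      have htr : t <:+ r := ⟨s, ht⟩
      rcases hr with rfl | rfl
      · by_cases htv' : t = v
        · subst htv'
          exact absurd ⟨s, [], by simp [← ht]⟩ hfac₂
        · exact absurd ⟨t, htne, fun he => by
            have := congrArg List.length he; omega, htv',
            Or.inr ⟨htv, htr⟩⟩ houv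
      · exact absurd ⟨t, htne, fun he => by
          have := congrArg List.length he; omega, htv, htr⟩ hov
    · push_neg at hc
      obtain ⟨x, hx⟩ := List.prefix_of_prefix_length_le ⟨b, rfl⟩ ⟨q, heq3.symm⟩ hc.le
      -- hx : v ++ x = t
      rcases hr with rfl | rfl
      · exact absurd ⟨s, x, by rw [← ht, ← hx]; simp⟩ hfac₂
      · have := congrArg List.length hx; simp at this; omega
  · -- same position
    obtain ⟨hap, hrest⟩ := List.append_inj heq' h.symm
    subst hap
    rcases le_or_gt r.length v.length with hc | hc
    · obtain ⟨x, hx⟩ := List.prefix_of_prefix_length_le ⟨q, hrest.symm⟩ ⟨b, rfl⟩ hc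
      rcases hr with rfl | rfl
      · exact absurd ⟨[], x, by simp [← hx]⟩ hfac₁
      · exact ⟨rfl, by omega⟩
    · obtain ⟨x, hx⟩ := List.prefix_of_prefix_length_le ⟨b, rfl⟩ ⟨q, hrest.symm⟩ hc.le
      rcases hr with rfl | rfl
      · exact absurd ⟨[], x, by simp [← hx]⟩ hfac₂
      · have := congrArg List.length hx; simp at this; omega
  · -- p longer: occurrence starts inside the middle v
    obtain ⟨s, hs⟩ := List.prefix_of_prefix_length_le ha hp h.le
    have hslen : a.length + s.length = p.length := by
      have := congrArg List.length hs; simpa using this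
    have hsne : s ≠ [] := by
      intro h0; subst h0; simp at hslen; omega
    have heq2 : v ++ b = s ++ (r ++ q) := by
      have : a ++ (v ++ b) = a ++ (s ++ (r ++ q)) := by
        rw [heq', ← hs]; simp
      exact List.append_cancel_left this
    have hsv : s.length ≤ v.length := by omega
    obtain ⟨t, ht⟩ := List.prefix_of_prefix_length_le ⟨r ++ q, heq2.symm⟩ ⟨b, rfl⟩ hsv
    -- ht : s ++ t = v
    have htlen : s.length + t.length = v.length := by
      have := congrArg List.length ht; simpa using this
    have htne : t ≠ [] := by
      intro h0; subst h0; simp at htlen; omega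
    have heq3 : t ++ b = r ++ q := by
      have : s ++ (t ++ b) = s ++ (r ++ q) := by
        rw [← heq2, ← ht]; simp
      exact List.append_cancel_left this
    rcases le_or_gt r.length t.length with hc | hc
    · obtain ⟨x, hx⟩ := List.prefix_of_prefix_length_le ⟨q, heq3.symm⟩ ⟨b, rfl⟩ hc
      -- hx : r ++ x = t
      rcases hr with rfl | rfl
      · exact absurd ⟨s, x, by rw [← ht, ← hx]; simp⟩ hfac₁
      · omega
    · obtain ⟨x, hx⟩ := List.prefix_of_prefix_length_le ⟨b, heq3⟩ ⟨q, rfl⟩ hc.le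
      -- hx : t ++ x = r
      have htvsuf : t <:+ v := ⟨s, ht⟩
      have htnev : t ≠ v := fun he => by
        have := congrArg List.length he; omega
      rcases hr with rfl | rfl
      · exact absurd ⟨t, htne, fun he => by
          have := congrArg List.length he; omega, htnev,
          Or.inl ⟨⟨x, hx⟩, htvsuf⟩⟩ houv
      · exact absurd ⟨t, htne, htnev, ⟨x, hx⟩, htvsuf⟩ hov
end
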